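/- arXiv:1901.09278 — 3 statements merged into one kernel-verified Lean document; each statement's English description precedes it below -/
import Mathlib

section
/- Let n, s, r be integers with n > s+r and s > r ≥ 1, and let F ⊆ C([n],2) have property U(s, s+r). If |⋃_{F∈F} F| > s+r, then ν(F) ≤ r. -/
open Finset
open scoped Classical

/-- `F` has property `U(s,q)`: any `s` (not necessarily distinct) members have union of size `≤ q`. -/
def propU (F : Finset (Finset ℕ)) (s q : ℕ) : Prop :=
  ∀ G : Fin s → Finset ℕ, (∀ i, G i ∈ F) → (Finset.univ.sup G).card ≤ q

/-- `A(p,r,n,k)`: the `k`-subsets of `[n] = {1,…,n}` meeting `[p]` in at least `r` elements. -/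
def famA (p r n k : ℕ) : Finset (Finset ℕ) :=
  (Finset.powersetCard k (Finset.Icc 1 n)).filter fun A => r ≤ (A ∩ Finset.Icc 1 p).card

/-- `G ≼ F`: comparing the increasing enumerations elementwise. -/
def shiftLE (G F : Finset ℕ) : Prop :=
  List.Forall₂ (· ≤ ·) (G.sort (· ≤ ·)) (F.sort (· ≤ ·))

/-- `F ⊆ C([n],k)` is shifted. -/
def IsShifted (n k : ℕ) (F : Finset (Finset ℕ)) : Prop :=
  ∀ A ∈ F, ∀ G ∈ Finset.powersetCard k (Finset.Icc 1 n), shiftLE G A → G ∈ F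

/-- `m(n,k,s,q)`: the maximum size of a family `F ⊆ C([n],k)` with property `U(s,q)`. -/
noncomputable def mMax (n k s q : ℕ) : ℕ :=
  ((Finset.powersetCard k (Finset.Icc 1 n)).powerset.filter fun F => propU F s q).sup
    Finset.card

/-!
Suppose `F` contains `r + 1` pairwise disjoint edges; they cover `2r + 2` vertices. Since `F`
covers more than `s + r` vertices, `s - r - 1` further edges reach `s - r - 1` further vertices,
so some `s` members of `F` cover `s + r + 1` vertices, contradicting `U(s, s + r)`.
-/

theorem Finset.card_sup_of_pairwiseDisjoint {α : Type*} [DecidableEq α] {T : Finset (Finset α)}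
    {k : ℕ} (hk : ∀ e ∈ T, e.card = k) (hT : (T : Set (Finset α)).PairwiseDisjoint id) :
    (T.sup id).card = k * T.card := by
  rw [sup_eq_biUnion, card_biUnion hT, sum_const_nat (f := fun u => #(id u)) hk, mul_comm]

theorem Finset.exists_subset_card_le_subset_sup {α : Type*} [DecidableEq α]
    {F : Finset (Finset α)} {W : Finset α} (hW : W ⊆ F.sup id) :
    ∃ E ⊆ F, E.card ≤ W.card ∧ W ⊆ E.sup id := by
  have hcover : ∀ v ∈ W, ∃ e ∈ F, v ∈ e := fun v hv => by simpa using hW hv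
  choose f hfF hvf using hcover
  refine ⟨W.attach.image fun v => f v.1 v.2, ?_, ?_, ?_⟩
  · intro e he
    obtain ⟨v, -, rfl⟩ := mem_image.mp he
    exact hfF v.1 v.2
  · exact card_image_le.trans card_attach.le
  · exact fun v hv =>
      mem_sup.mpr ⟨f v hv, mem_image_of_mem _ (mem_attach _ ⟨v, hv⟩), hvf v hv⟩

theorem propU.card_sup_le {F E : Finset (Finset ℕ)} {s q : ℕ} (hU : propU F s q)
    (hEF : E ⊆ F) (hE : E.Nonempty) (hEs : E.card ≤ s) : (E.sup id).card ≤ q := by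
  have : Nonempty E := hE.to_subtype
  obtain ⟨ι⟩ : Nonempty (E ↪ Fin s) :=
    Function.Embedding.nonempty_of_card_le (by simpa using hEs)
  have hsurj : Function.Surjective (Function.invFun ι) := Function.invFun_surjective ι.injective
  set G : Fin s → Finset ℕ := fun i => (Function.invFun ι i).1
  have hsup : E.sup id ≤ univ.sup G := Finset.sup_le fun e he => by
    obtain ⟨i, hi⟩ := hsurj ⟨e, he⟩
    exact le_sup_of_le (mem_univ i) (by simp [G, hi])
  exact (card_le_card hsup).trans (hU G fun i => hEF (Function.invFun ι i).2)

/-- Under `U(s, q)`, each of `m` further members of `F` can be made to add a new vertex. -/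
theorem propU.card_sup_add_le {F E : Finset (Finset ℕ)} {s q m : ℕ} (hU : propU F s q)
    (hEF : E ⊆ F) (hE : E.Nonempty) (hEs : E.card + m ≤ s)
    (hm : (E.sup id).card + m ≤ (F.sup id).card) : (E.sup id).card + m ≤ q := by
  have hfree : m ≤ (F.sup id \ E.sup id).card := by
    have := le_card_sdiff (E.sup id) (F.sup id)
    omega
  obtain ⟨W, hWfree, hWm⟩ := exists_subset_card_eq hfree
  obtain ⟨E', hE'F, hE'W, hWE'⟩ :=
    exists_subset_card_le_subset_sup (hWfree.trans sdiff_subset)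
  have hdisj : Disjoint (E.sup id) W := disjoint_of_subset_right hWfree disjoint_sdiff
  have hcover : E.sup id ∪ W ⊆ (E ∪ E').sup id := by
    rw [sup_union]
    exact union_subset_union le_rfl hWE'
  calc (E.sup id).card + m = (E.sup id ∪ W).card := by rw [card_union_of_disjoint hdisj, hWm]
    _ ≤ ((E ∪ E').sup id).card := card_le_card hcover
    _ ≤ q := hU.card_sup_le (union_subset hEF hE'F) (hE.mono subset_union_left)
        ((card_union_le E E').trans (by omega))

theorem stmt5_general (n s r : ℕ) (hsr : s > r)
    (F : Finset (Finset ℕ)) (hF : F ⊆ Finset.powersetCard 2 (Finset.Icc 1 n))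
    (hU : propU F s (s + r)) (hcover : (F.sup id).card > s + r) :
    ∀ S ⊆ F, (S : Set (Finset ℕ)).PairwiseDisjoint id → S.card ≤ r := by
  intro S hSF hS
  by_contra! hSr
  obtain ⟨T, hTS, hTr⟩ := exists_subset_card_eq hSr
  have hTF : T ⊆ F := hTS.trans hSF
  have hT2 : (T.sup id).card = 2 * T.card :=
    card_sup_of_pairwiseDisjoint (fun e he => (mem_powersetCard.mp (hF (hTF he))).2)
      (hS.subset hTS)
  have hT : T.Nonempty := card_pos.mp (by omega)
  have := hU.card_sup_add_le (m := s - r - 1) hTF hT (by omega) (by omega)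
  omega

/-- Claim 2.2 of the paper. -/
theorem stmt5 (n s r : ℕ) (hn : n > s + r) (hsr : s > r) (hr : 1 ≤ r)
    (F : Finset (Finset ℕ)) (hF : F ⊆ Finset.powersetCard 2 (Finset.Icc 1 n))
    (hU : propU F s (s + r)) (hcover : (F.sup id).card > s + r) :
    ∀ S ⊆ F, (S : Set (Finset ℕ)).PairwiseDisjoint id → S.card ≤ r :=
  stmt5_general n s r hsr F hF hU hcover
end

section
/- Let s ≥ 2 and n ≥ 2s+2 be integers, and let F ⊆ C([n],3) be a shifted family with property U(s, 2s+1) such that {2,3,4} ∈ F. Then {1, s+3, 2s+2} ∉ F. -/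
/-!
If `{1, s+3, 2s+2} ∈ F`, shiftedness puts each `{1, j+4, s+j+3}` (`1 ≤ j ≤ s-1`) in `F`.
These `s-1` triples together with `{2,3,4}` are `s` members of `F` whose union is all of
`[2s+2]`, contradicting `U(s, 2s+1)`.
-/

open Finset
open scoped Classical

lemma sort_triple {a b c : ℕ} (hab : a < b) (hbc : b < c) :
    ({a, b, c} : Finset ℕ).sort (· ≤ ·) = [a, b, c] := by
  rw [sort_insert, sort_insert, sort_singleton]
  · intro x hx; simp only [mem_singleton] at hx; omega
  · simp only [mem_singleton]; omega
  · intro x hx; simp only [mem_insert, mem_singleton] at hx; omega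
  · simp only [mem_insert, mem_singleton]; omega

lemma card_triple {a b c : ℕ} (hab : a < b) (hbc : b < c) :
    ({a, b, c} : Finset ℕ).card = 3 := by
  rw [card_insert_of_notMem (by simp only [mem_insert, mem_singleton]; omega),
    card_insert_of_notMem (by simp only [mem_singleton]; omega), card_singleton]

lemma shiftLE_triple {a b c a' b' c' : ℕ} (hab : a < b) (hbc : b < c)
    (hab' : a' < b') (hbc' : b' < c') (ha : a ≤ a') (hb : b ≤ b') (hc : c ≤ c') :
    shiftLE {a, b, c} {a', b', c'} := by
  rw [shiftLE, sort_triple hab hbc, sort_triple hab' hbc']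
  exact .cons ha (.cons hb (.cons hc .nil))

lemma IsShifted.triple_mem {n : ℕ} {F : Finset (Finset ℕ)} (hF : IsShifted n 3 F)
    {a b c a' b' c' : ℕ} (ha₀ : 1 ≤ a) (hab : a < b) (hbc : b < c) (hcn : c ≤ n)
    (hab' : a' < b') (hbc' : b' < c') (ha : a ≤ a') (hb : b ≤ b') (hc : c ≤ c')
    (hmem : {a', b', c'} ∈ F) : {a, b, c} ∈ F := by
  refine hF _ hmem _ (mem_powersetCard.2 ⟨?_, card_triple hab hbc⟩)
    (shiftLE_triple hab hbc hab' hbc' ha hb hc)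
  intro x hx
  simp only [mem_insert, mem_singleton] at hx
  rw [mem_Icc]
  omega

def coveringTriples (s : ℕ) (j : Fin s) : Finset ℕ :=
  if j.val = 0 then {2, 3, 4} else {1, j.val + 4, s + j.val + 3}

lemma Icc_subset_sup_coveringTriples {s : ℕ} (hs : 2 ≤ s) :
    Icc 1 (2 * s + 2) ⊆ univ.sup (coveringTriples s) := by
  intro x hx
  rw [mem_Icc] at hx
  obtain ⟨j, hj, hxj⟩ : ∃ j, j < s ∧
      (j = 0 ∧ 2 ≤ x ∧ x ≤ 4 ∨ j ≠ 0 ∧ (x = 1 ∨ x = j + 4 ∨ x = s + j + 3)) := by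
    rcases (by omega : x = 1 ∨ 2 ≤ x ∧ x ≤ 4 ∨ 5 ≤ x ∧ x ≤ s + 3 ∨ s + 4 ≤ x) with
      h | h | h | h
    exacts [⟨1, by omega⟩, ⟨0, by omega⟩, ⟨x - 4, by omega⟩, ⟨x - s - 3, by omega⟩]
  refine mem_sup.2 ⟨⟨j, hj⟩, mem_univ _, ?_⟩
  simp only [coveringTriples]
  split_ifs <;> simp only [mem_insert, mem_singleton] <;> omega

theorem stmt10_general (n s : ℕ) (hs : 2 ≤ s) (hn : 2 * s + 2 ≤ n)
    (F : Finset (Finset ℕ))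
    (hshift : IsShifted n 3 F) (hU : propU F s (2 * s + 1))
    (hmem : ({2, 3, 4} : Finset ℕ) ∈ F) :
    ({1, s + 3, 2 * s + 2} : Finset ℕ) ∉ F := by
  intro hbad
  have hcovering : ∀ j, coveringTriples s j ∈ F := by
    intro j
    have hj := j.isLt
    unfold coveringTriples
    split_ifs with h0
    · exact hmem
    · exact hshift.triple_mem (by omega) (by omega) (by omega) (by omega) (by omega)
        (by omega) le_rfl (by omega) (by omega) hbad
  have hcard := (card_le_card (Icc_subset_sup_coveringTriples hs)).trans (hU _ hcovering)
  rw [Nat.card_Icc] at hcard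
  omega

/-- Claim 2.7 of the paper. -/
theorem stmt10 (n s : ℕ) (hs : 2 ≤ s) (hn : 2 * s + 2 ≤ n)
    (F : Finset (Finset ℕ)) (hF : F ⊆ Finset.powersetCard 3 (Finset.Icc 1 n))
    (hshift : IsShifted n 3 F) (hU : propU F s (2 * s + 1))
    (hmem : ({2, 3, 4} : Finset ℕ) ∈ F) :
    ({1, s + 3, 2 * s + 2} : Finset ℕ) ∉ F :=
  stmt10_general n s hs hn F hshift hU hmem
end

section
/- Let n ≥ 8 and let F ⊆ C([n],3) have property U(3,7) with {1,2,8} ∈ F. Then |F ∩ C([7],3)| ≤ 25, i.e., F contains at most 25 of the 35 three-element subsets of [7]. -/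
/-!
Pair each 3-subset `B` of `{3,…,7}` with `{1} ∪ ({3,…,7} \ B)`. The ten pairs are disjoint, and
together with `{1,2,8}` the two members of a pair cover all of `[8]`, so `U(3,7)` allows at most
one of them in `F`. Hence `F` misses at least ten of the 35 triples of `[7]`.
-/

open Finset
open scoped Classical

theorem propU.card_union_le {F : Finset (Finset ℕ)} {q : ℕ} (hU : propU F 3 q)
    {A B C : Finset ℕ} (hA : A ∈ F) (hB : B ∈ F) (hC : C ∈ F) : (A ∪ B ∪ C).card ≤ q := by
  have h := hU ![A, B, C] (by intro i; fin_cases i <;> assumption)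
  have hsup : univ.sup ![A, B, C] = A ∪ B ∪ C := by
    simp [Fin.univ_succ, sup_eq_union, union_assoc]
  rwa [hsup] at h

/-- Choosing from each pair `{b, f b}` the member outside `S` embeds `P` into `U \ S`. -/
theorem Finset.card_add_card_le_of_pairing {α : Type*} [DecidableEq α] {S U P : Finset α}
    {f : α → α} (hS : S ⊆ U) (hP : P ⊆ U) (hfU : ∀ b ∈ P, f b ∈ U) (hf : Set.InjOn f P)
    (hfP : ∀ b ∈ P, f b ∉ P) (hpair : ∀ b ∈ P, b ∈ S → f b ∉ S) :
    S.card + P.card ≤ U.card := by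
  let ψ : α → α := fun b => if b ∈ S then f b else b
  have hmaps : Set.MapsTo ψ P (U \ S : Finset α) := by
    intro b hb
    by_cases hbS : b ∈ S
    · simpa [ψ, hbS] using ⟨hfU b hb, hpair b hb hbS⟩
    · simpa [ψ, hbS] using hP hb
  have hψ : Set.InjOn ψ P := by
    intro b hb b' hb' h
    by_cases hbS : b ∈ S <;> by_cases hb'S : b' ∈ S <;> simp only [ψ, hbS, hb'S, if_true,
      if_false] at h
    · exact hf hb hb' h
    · exact absurd (h ▸ hb') (hfP b hb)
    · exact absurd (h ▸ hb) (hfP b' hb')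
    · exact h
  have hle : P.card ≤ U.card - S.card := by
    simpa only [card_sdiff_of_subset hS] using card_le_card_of_injOn ψ hmaps hψ
  have hSU : S.card ≤ U.card := card_le_card hS
  omega

section Partner

variable {C B : Finset ℕ} {a : ℕ}

theorem card_insert_sdiff_of_subset (ha : a ∉ C) (hB : B ⊆ C) :
    (insert a (C \ B)).card = C.card - B.card + 1 := by
  rw [card_insert_of_notMem (fun h => ha (mem_sdiff.mp h).1), card_sdiff_of_subset hB]

theorem sdiff_insert_sdiff_of_subset (ha : a ∉ C) (hB : B ⊆ C) :
    C \ insert a (C \ B) = B := by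
  ext x
  constructor
  · intro hx
    simp only [mem_sdiff, mem_insert, not_or, not_and, not_not] at hx
    exact hx.2.2 hx.1
  · intro hx
    simp only [mem_sdiff, mem_insert, not_or, not_and, not_not]
    exact ⟨hB hx, fun h => ha (h ▸ hB hx), fun _ => hx⟩

theorem union_insert_sdiff_of_subset (hB : B ⊆ C) : B ∪ insert a (C \ B) = insert a C := by
  ext x
  by_cases hx : x ∈ B
  · simp [hx, hB hx]
  · simp [hx]

end Partner

theorem stmt12_general
    (F : Finset (Finset ℕ))
    (hU : propU F 3 7) (hmem : ({1, 2, 8} : Finset ℕ) ∈ F) :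
    (F ∩ Finset.powersetCard 3 (Finset.Icc 1 7)).card ≤ 25 := by
  have h1 : (1 : ℕ) ∉ Icc 3 7 := by simp
  have hsub : Icc 3 7 ⊆ Icc 1 7 := Icc_subset_Icc (by norm_num) le_rfl
  have key := card_add_card_le_of_pairing (S := F ∩ powersetCard 3 (Icc 1 7))
    (U := powersetCard 3 (Icc 1 7)) (P := powersetCard 3 (Icc 3 7))
    (f := fun B => insert 1 (Icc 3 7 \ B)) inter_subset_right
    (powersetCard_mono hsub)
    (fun B hB => by
      rw [mem_powersetCard] at hB ⊢
      refine ⟨insert_subset (by simp) (sdiff_subset.trans hsub), ?_⟩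
      rw [card_insert_sdiff_of_subset h1 hB.1, hB.2]
      rfl)
    (fun B hB B' hB' h => by
      rw [← sdiff_insert_sdiff_of_subset h1 (mem_powersetCard.mp hB).1,
        ← sdiff_insert_sdiff_of_subset h1 (mem_powersetCard.mp hB').1]
      exact congrArg (Icc 3 7 \ ·) h)
    (fun B _ hB => h1 ((mem_powersetCard.mp hB).1 (mem_insert_self 1 _)))
    (fun B hB hBS hB'S => by
      have h7 := hU.card_union_le (mem_inter.mp hBS).1 (mem_inter.mp hB'S).1 hmem
      rw [union_insert_sdiff_of_subset (mem_powersetCard.mp hB).1] at h7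
      -- `{1} ∪ {3,…,7} ∪ {1,2,8} = [8]`
      exact absurd h7 (by decide))
  simp [Nat.choose] at key
  omega

/-- Claim 2.11 of the paper. -/
theorem stmt12 (n : ℕ) (hn : 8 ≤ n)
    (F : Finset (Finset ℕ)) (hF : F ⊆ Finset.powersetCard 3 (Finset.Icc 1 n))
    (hU : propU F 3 7) (hmem : ({1, 2, 8} : Finset ℕ) ∈ F) :
    (F ∩ Finset.powersetCard 3 (Finset.Icc 1 7)).card ≤ 25 :=
  stmt12_general F hU hmem
end
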